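/- Pump-up lemma for star networks: if C is a b-configuration of a 1-phase-bounded protocol reachable from some initial star configuration, with broadcast-print (q, Λ), then for every N ∈ ℕ there exists an initial star configuration C'_in and a reachable b-configuration C' with the same broadcast-print (q, Λ) such that for every q' ∈ Λ, at least N non-root vertices of C' are in state q'. -/

import Mathlib

namespace BN

/-- Actions of a broadcast protocol: broadcast `!!m`, reception `?m`, internal `τ`. -/
inductive Act (M : Type) : Type where
  | brd : M → Act M
  | rcv : M → Act M
  | tau : Act M

/-- A broadcast protocol: an initial state and a set of transitions. -/
structure Protocol (Q M : Type) : Type where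
  qin : Q
  delta : Set (Q × Act M × Q)

variable {Q M V : Type}

/-- `q` has an outgoing reception of `m`. -/
def canRecv (P : Protocol Q M) (q : Q) (m : M) : Prop :=
  ∃ q', (q, Act.rcv m, q') ∈ P.delta

/-- One step of the broadcast network semantics over topology `G`,
performed by vertex `v` taking transition `t`. -/
def Step (G : SimpleGraph V) (P : Protocol Q M) (v : V)
    (t : Q × Act M × Q) (L L' : V → Q) : Prop :=
  t ∈ P.delta ∧ L v = t.1 ∧ L' v = t.2.2 ∧
  (match t.2.1 with
   | Act.tau => ∀ u, u ≠ v → L' u = L u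
   | Act.brd m =>
       (∀ u, G.Adj v u →
          ((L u, Act.rcv m, L' u) ∈ P.delta ∨ (¬ canRecv P (L u) m ∧ L' u = L u))) ∧
       (∀ u, u ≠ v → ¬ G.Adj v u → L' u = L u)
   | Act.rcv _ => False)

def StepAny (G : SimpleGraph V) (P : Protocol Q M) (L L' : V → Q) : Prop :=
  ∃ v t, Step G P v t L L'

def Reach (G : SimpleGraph V) (P : Protocol Q M) : (V → Q) → (V → Q) → Prop :=
  Relation.ReflTransGen (StepAny G P)

def initConf (P : Protocol Q M) : V → Q := fun _ => P.qin

/-- `qf` is coverable over the class of all (finite) graph topologies. -/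
def Coverable (P : Protocol Q M) (qf : Q) : Prop :=
  ∃ (V' : Type) (_ : Fintype V') (G : SimpleGraph V') (L : V' → Q),
    Reach G P (initConf P) L ∧ ∃ v, L v = qf

/-- A tree topology: a prefix-closed finite set of words over ℕ containing ε. -/
structure TreeTopo : Type where
  verts : Finset (List ℕ)
  nil_mem : ([] : List ℕ) ∈ verts
  prefixClosed : ∀ w ∈ verts, ∀ w' : List ℕ, w' <+: w → w' ∈ verts

abbrev TreeTopo.Vert (T : TreeTopo) : Type := {w : List ℕ // w ∈ T.verts}

def TreeTopo.root (T : TreeTopo) : T.Vert := ⟨[], T.nil_mem⟩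

/-- The graph of a tree topology: each word `w ++ [x]` is adjacent to its parent `w`. -/
def TreeTopo.graph (T : TreeTopo) : SimpleGraph T.Vert where
  Adj u v := (∃ x : ℕ, (v : List ℕ) = (u : List ℕ) ++ [x]) ∨
             (∃ x : ℕ, (u : List ℕ) = (v : List ℕ) ++ [x])
  symm := by constructor; intro u v h; exact h.symm
  loopless := by
    constructor; intro u h
    rcases h with ⟨x, hx⟩ | ⟨x, hx⟩ <;> simpa using congrArg List.length hx

def CoverableWith (T : TreeTopo) (P : Protocol Q M) (qf : Q) : Prop :=
  ∃ L : T.Vert → Q, Reach T.graph P (initConf P) L ∧ ∃ u, L u = qf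

def CoverableTreeRoot (P : Protocol Q M) (qf : Q) : Prop :=
  ∃ (T : TreeTopo) (L : T.Vert → Q),
    Reach T.graph P (initConf P) L ∧ L T.root = qf

/-- `(T, lam)` is the unfolding of graph `G` at vertex `v` to depth `n`. -/
structure IsUnfolding {V : Type} (G : SimpleGraph V) (v : V) (n : ℕ)
    (T : TreeTopo) (lam : T.Vert → V) : Prop where
  root_lbl : lam T.root = v
  depth_le : ∀ w ∈ T.verts, w.length ≤ n
  root_children :
    Set.BijOn lam {u : T.Vert | ∃ x : ℕ, (u : List ℕ) = [x]} (G.neighborSet v)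
  children : ∀ (u : T.Vert) (w : List ℕ) (hw : w ∈ T.verts) (x : ℕ),
      (u : List ℕ) = w ++ [x] → (u : List ℕ).length < n →
      Set.BijOn lam {u' : T.Vert | ∃ y : ℕ, (u' : List ℕ) = (u : List ℕ) ++ [y]}
        (G.neighborSet (lam u) \ {lam ⟨w, hw⟩})
  no_deep : ∀ u : T.Vert, n ≤ (u : List ℕ).length →
      ∀ x : ℕ, (u : List ℕ) ++ [x] ∉ T.verts

/-- Phase tags annotating states: `zero` (phase 0), broadcast phase `j`, reception phase `j`. -/
inductive PTag : Type where
  | zero : PTag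
  | bph : ℕ → PTag
  | rph : ℕ → PTag
deriving DecidableEq

def bOf : ℕ → PTag
  | 0 => .zero
  | j+1 => .bph (j+1)

def rOf : ℕ → PTag
  | 0 => .zero
  | j+1 => .rph (j+1)

/-- `φ` witnesses that `P` is `k`-phase-bounded. -/
def IsPhaseAssignment (k : ℕ) (P : Protocol Q M) (φ : Q → PTag) : Prop :=
  φ P.qin = .zero ∧
  (∀ q : Q, φ q = .zero ∨ ∃ j, 1 ≤ j ∧ j ≤ k ∧ (φ q = .bph j ∨ φ q = .rph j)) ∧
  ∀ t ∈ P.delta,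
    (match t.2.1 with
     | Act.tau => φ t.1 = φ t.2.2
     | Act.brd _ =>
         (∃ j, 1 ≤ j ∧ j ≤ k ∧ φ t.1 = .bph j ∧ φ t.2.2 = .bph j) ∨
         (∃ i, i < k ∧ φ t.1 = rOf i ∧ φ t.2.2 = .bph (i+1))
     | Act.rcv _ =>
         (∃ j, 1 ≤ j ∧ j ≤ k ∧ φ t.1 = .rph j ∧ φ t.2.2 = .rph j) ∨
         (∃ i, i < k ∧ φ t.1 = bOf i ∧ φ t.2.2 = .rph (i+1)) ∨
         (1 ≤ k ∧ φ t.1 = .bph k ∧ φ t.2.2 = .rph k))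

def IsPhaseBounded (k : ℕ) (P : Protocol Q M) : Prop :=
  ∃ φ : Q → PTag, IsPhaseAssignment k P φ

/-- The `k`-unfolding `Pₖ` of a protocol `P`. -/
def unfoldP (P : Protocol Q M) (k : ℕ) : Protocol (Q × PTag) M where
  qin := (P.qin, .zero)
  delta :=
    {t | ∃ q p, (q, Act.tau, p) ∈ P.delta ∧ t = ((q, .zero), Act.tau, (p, .zero))} ∪
    {t | ∃ q p α j, 1 ≤ j ∧ j ≤ k ∧ (q, α, p) ∈ P.delta ∧
        (α = Act.tau ∨ ∃ m, α = Act.rcv m) ∧ t = ((q, .rph j), α, (p, .rph j))} ∪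
    {t | ∃ q p α j, 1 ≤ j ∧ j ≤ k ∧ (q, α, p) ∈ P.delta ∧
        (α = Act.tau ∨ ∃ m, α = Act.brd m) ∧ t = ((q, .bph j), α, (p, .bph j))} ∪
    {t | ∃ q p m j, j < k ∧ (q, Act.brd m, p) ∈ P.delta ∧
        t = ((q, rOf j), Act.brd m, (p, .bph (j+1)))} ∪
    {t | ∃ q p m j, j < k ∧ (q, Act.rcv m, p) ∈ P.delta ∧
        t = ((q, bOf j), Act.rcv m, (p, .rph (j+1)))} ∪
    {t | ∃ q p m, 1 ≤ k ∧ (q, Act.rcv m, p) ∈ P.delta ∧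
        t = ((q, .bph k), Act.rcv m, (p, .rph k))}

/-- Star topology: root `none` adjacent to every leaf `some i`, no other edges. -/
def starGraph (ι : Type) : SimpleGraph (Option ι) where
  Adj u v := (u = none ∧ v ≠ none) ∨ (v = none ∧ u ≠ none)
  symm := by constructor; intro u v h; tauto
  loopless := by constructor; intro u h; tauto

/-- For a 1-phase-bounded protocol with witness `φ`, `Q^b = Q₀ ∪ Q₁^b`. -/
def Qb (φ : Q → PTag) : Set Q := {q | φ q = .zero ∨ φ q = .bph 1}

/-- The set component of the broadcast-print of a star configuration. -/
def bprintSet {ι : Type} (φ : Q → PTag) (L : Option ι → Q) : Set Q :=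
  {q | q ∈ Qb φ ∧ ∃ i, L (some i) = q}

/-- The abstract transition relation `⇒` on broadcast-prints. -/
def PrintStep (P : Protocol Q M) (φ : Q → PTag) :
    (Q × Set Q) → (Q × Set Q) → Prop := fun pr pr' =>
  ∃ (ι : Type) (_ : Fintype ι) (L L' : Option ι → Q),
    StepAny (starGraph ι) P L L' ∧ L none ∈ Qb φ ∧ L' none ∈ Qb φ ∧
    pr = (L none, bprintSet φ L) ∧ pr' = (L' none, bprintSet φ L')

/-- Line topology on `Fin ℓ`: consecutive vertices are adjacent. -/
def lineGraph (ℓ : ℕ) : SimpleGraph (Fin ℓ) where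
  Adj i j := (i : ℕ) + 1 = (j : ℕ) ∨ (j : ℕ) + 1 = (i : ℕ)
  symm := by constructor; intro i j h; tauto
  loopless := by constructor; intro i h; rcases h with h | h <;> omega

/-- `t` is a broadcast transition. -/
def IsBrdT (t : Q × Act M × Q) : Prop := ∃ m, t.2.1 = Act.brd m

/-- In the execution described by `vs, ts` of length `n`, `i` is the first index at
which vertex `u` performs a broadcast. -/
def IsFirstBrd {V' : Type} (vs : ℕ → V') (ts : ℕ → Q × Act M × Q) (n : ℕ)
    (u : V') (i : ℕ) : Prop :=
  i < n ∧ vs i = u ∧ IsBrdT (ts i) ∧ ∀ j < i, vs j = u → ¬ IsBrdT (ts j)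

/-- Every transition of `u` occurs no later than every broadcast of `w`
(i.e. lastBroadcast(u) ≤ firstBroadcast(w)). -/
def BrdOrder {V' : Type} (n : ℕ) (vs : ℕ → V') (ts : ℕ → Q × Act M × Q)
    (u w : V') : Prop :=
  ∀ j j', j < n → j' < n → vs j = u → vs j' = w → IsBrdT (ts j') → j ≤ j'

/-- One application of the pair-coverability operator. -/
def pairStep (P : Protocol Q M) (S : Set (Q × Q)) : Set (Q × Q) :=
  S ∪
  {p | ∃ p₁, (p₁, p.2) ∈ S ∧ (p₁, Act.tau, p.1) ∈ P.delta} ∪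
  {p | ∃ p₂, (p.1, p₂) ∈ S ∧ (p₂, Act.tau, p.2) ∈ P.delta} ∪
  {p | ∃ p₁ p₂ m, (p₁, p₂) ∈ S ∧ (p₂, Act.brd m, p.2) ∈ P.delta ∧
      (p₁, Act.rcv m, p.1) ∈ P.delta} ∪
  {p | ∃ p₂ m, (p.1, p₂) ∈ S ∧ (p₂, Act.brd m, p.2) ∈ P.delta ∧ ¬ canRecv P p.1 m} ∪
  {p | p.1 = P.qin ∧ ∃ q', (p.2, q') ∈ S}

/-- The iteration `S₀ ⊆ S₁ ⊆ …` of the pair-coverability operator. -/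
def Siter (P : Protocol Q M) : ℕ → Set (Q × Q)
  | 0 => {(P.qin, P.qin)}
  | i+1 => pairStep P (Siter P i)

/-!
Give every leaf `N + 1` copies, all in its state. If the root of a star ends a run in `Qb`, it was
in `Qb` throughout: `τ` keeps the phase, sources of broadcasts lie in `Qb`, and receptions lead
out of `Qb`. In particular the root never received a broadcast of a leaf, so every leaf step is
local to that leaf and can be replayed by each of its copies in turn, while a root step acts on
all copies at once.
-/

section PumpUp

variable {ι κ : Type}

namespace IsPhaseAssignment

variable {k : ℕ} {P : Protocol Q M} {φ : Q → PTag} {q q' : Q} {m : M}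

theorem not_mem_Qb_of_rcv (hφ : IsPhaseAssignment k P φ)
    (h : (q, Act.rcv m, q') ∈ P.delta) : q' ∉ Qb φ := by
  rcases hφ.2.2 _ h with ⟨_, _, _, _, h'⟩ | ⟨_, _, _, h'⟩ | ⟨_, _, h'⟩ <;>
    simp [Qb, h']

theorem mem_Qb_of_brd (hφ : IsPhaseAssignment 1 P φ)
    (h : (q, Act.brd m, q') ∈ P.delta) : q ∈ Qb φ := by
  rcases hφ.2.2 _ h with ⟨j, _, _, h', _⟩ | ⟨i, hi, h', _⟩
  · right; rw [h']; congr 1; omega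
  · left; rw [h', Nat.lt_one_iff.mp hi]; rfl

theorem mem_Qb_iff_of_tau (hφ : IsPhaseAssignment k P φ)
    (h : (q, Act.tau, q') ∈ P.delta) : q ∈ Qb φ ↔ q' ∈ Qb φ := by
  have hq : φ q = φ q' := hφ.2.2 _ h
  simp only [Qb, Set.mem_ofPred_eq, hq]

end IsPhaseAssignment

theorem starGraph_adj_none {u : Option ι} : (starGraph ι).Adj none u ↔ u ≠ none := by
  simp [starGraph]

theorem starGraph_adj_some {i : ι} {u : Option ι} : (starGraph ι).Adj (some i) u ↔ u = none := by
  simp [starGraph]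

/-- Leaves of a star are pairwise non-adjacent, so only the root could receive a leaf's
broadcast. -/
def IsLeafLocal (P : Protocol Q M) (root : Q) (t : Q × Act M × Q) : Prop :=
  t.2.1 = Act.tau ∨ ∃ m, t.2.1 = Act.brd m ∧ ¬ canRecv P root m

theorem step_update_leaf [DecidableEq ι] {P : Protocol Q M} {t : Q × Act M × Q}
    {L : Option ι → Q} {i : ι} (ht : t ∈ P.delta) (hlocal : IsLeafLocal P (L none) t)
    (hi : L (some i) = t.1) :
    Step (starGraph ι) P (some i) t L (Function.update L (some i) t.2.2) := by
  have hother : ∀ u, u ≠ some i → Function.update L (some i) t.2.2 u = L u :=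
    fun u hu => Function.update_of_ne hu _ _
  refine ⟨ht, hi, Function.update_self .., ?_⟩
  rcases hlocal with htau | ⟨m, hbrd, hrecv⟩
  · rw [htau]; exact hother
  · rw [hbrd]
    refine ⟨fun u hu => ?_, fun u hu _ => hother u hu⟩
    obtain rfl := starGraph_adj_some.mp hu
    exact Or.inr ⟨hrecv, hother none (Option.some_ne_none i).symm⟩

theorem reach_of_isLeafLocal {P : Protocol Q M} {t : Q × Act M × Q} (ht : t ∈ P.delta)
    (S : Finset ι) {L L' : Option ι → Q} (hlocal : IsLeafLocal P (L none) t)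
    (hroot : L' none = L none) (hS : ∀ i ∈ S, L (some i) = t.1 ∧ L' (some i) = t.2.2)
    (hout : ∀ i ∉ S, L' (some i) = L (some i)) :
    Reach (starGraph ι) P L L' := by
  classical
  induction S using Finset.induction_on generalizing L' with
  | empty =>
    have : L' = L := funext fun u => u.rec hroot fun i => hout i (Finset.notMem_empty i)
    exact this ▸ Relation.ReflTransGen.refl
  | insert a S ha ih =>
    set L'' := Function.update L' (some a) (L (some a))
    have hL'' : Reach (starGraph ι) P L L'' := by
      refine ih ?_ (fun i hi => ?_) (fun i hi => ?_)
      · simpa [L''] using hroot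
      · have hia : i ≠ a := by rintro rfl; exact ha hi
        simpa [L'', hia] using hS i (Finset.mem_insert_of_mem hi)
      · by_cases hia : i = a
        · simp [L'', hia]
        · simpa [L'', hia] using hout i (by simp [hia, hi])
    have hstep : Function.update L'' (some a) t.2.2 = L' := by
      simp [L'', (hS a (Finset.mem_insert_self a S)).2]
    refine hL''.tail ⟨some a, t, hstep ▸ step_update_leaf ht ?_ ?_⟩
    · simpa [L'', hroot] using hlocal
    · simpa [L''] using (hS a (Finset.mem_insert_self a S)).1

def replicateLeaves (κ : Type) (L : Option ι → Q) : Option (ι × κ) → Q :=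
  fun u => L (u.map Prod.fst)

@[simp]
theorem replicateLeaves_none (L : Option ι → Q) : replicateLeaves κ L none = L none := rfl

@[simp]
theorem replicateLeaves_some (L : Option ι → Q) (p : ι × κ) :
    replicateLeaves κ L (some p) = L (some p.1) := rfl

theorem bprintSet_replicateLeaves [Nonempty κ] (φ : Q → PTag) (L : Option ι → Q) :
    bprintSet φ (replicateLeaves κ L) = bprintSet φ L := by
  ext q
  simp only [bprintSet, replicateLeaves_some, Set.mem_ofPred_eq, Prod.exists, exists_const]

theorem ncard_replicateLeaves_eq (L : Option ι → Q) (q : Q) :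
    {p : ι × κ | replicateLeaves κ L (some p) = q}.ncard =
      {i : ι | L (some i) = q}.ncard * Nat.card κ := by
  have : {p : ι × κ | replicateLeaves κ L (some p) = q} = {i | L (some i) = q} ×ˢ Set.univ := by
    ext p; simp
  rw [this, Set.ncard_prod, Set.ncard_univ]

variable {P : Protocol Q M} {φ : Q → PTag} {b c : Option ι → Q}

theorem Step.replicateLeaves_of_root (hφ : IsPhaseAssignment 1 P φ) {t : Q × Act M × Q}
    (hstep : Step (starGraph ι) P none t b c) (hc : c none ∈ Qb φ) :
    b none ∈ Qb φ ∧
      Step (starGraph (ι × κ)) P none t (replicateLeaves κ b) (replicateLeaves κ c) := by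
  obtain ⟨ht, hb, hc', hmatch⟩ := hstep
  obtain ⟨q, a, q'⟩ := t
  dsimp only at hb hc'
  cases a with
  | tau =>
    refine ⟨hb ▸ (hφ.mem_Qb_iff_of_tau ht).mpr (hc' ▸ hc), ht, hb, hc', ?_⟩
    rintro (_ | p) hp
    · exact absurd rfl hp
    · exact hmatch (some p.1) (Option.some_ne_none _)
  | brd m =>
    refine ⟨hb ▸ hφ.mem_Qb_of_brd ht, ht, hb, hc', fun u hu => ?_, fun u hu hnadj => ?_⟩
    · obtain _ | p := u
      · exact absurd rfl (starGraph_adj_none.mp hu)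
      · exact hmatch.1 (some p.1) (starGraph_adj_none.mpr (Option.some_ne_none _))
    · exact absurd (starGraph_adj_none.mpr hu) hnadj
  | rcv m => exact hmatch.elim

theorem Step.isLeafLocal_of_leaf {k : ℕ} (hφ : IsPhaseAssignment k P φ) {t : Q × Act M × Q}
    {i : ι} (hstep : Step (starGraph ι) P (some i) t b c) (hc : c none ∈ Qb φ) :
    IsLeafLocal P (b none) t ∧ c none = b none ∧ ∀ j ≠ i, c (some j) = b (some j) := by
  obtain ⟨-, -, -, hmatch⟩ := hstep
  obtain ⟨q, a, q'⟩ := t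
  cases a with
  | tau =>
    exact ⟨Or.inl rfl, hmatch none (Option.some_ne_none i).symm,
      fun j hj => hmatch (some j) (Option.some_injective _ |>.ne hj)⟩
  | brd m =>
    obtain ⟨hadj, hnadj⟩ := hmatch
    obtain hrecv | ⟨hrecv, hroot⟩ := hadj none (starGraph_adj_some.mpr rfl)
    · exact absurd hc (hφ.not_mem_Qb_of_rcv hrecv)
    · exact ⟨Or.inr ⟨m, rfl, hrecv⟩, hroot, fun j hj =>
        hnadj (some j) (Option.some_injective _ |>.ne hj)
          (starGraph_adj_some.not.mpr (Option.some_ne_none j))⟩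
  | rcv m => exact hmatch.elim

theorem Step.replicateLeaves_of_leaf [Fintype κ] {k : ℕ} (hφ : IsPhaseAssignment k P φ)
    {t : Q × Act M × Q} {i : ι} (hstep : Step (starGraph ι) P (some i) t b c)
    (hc : c none ∈ Qb φ) :
    b none ∈ Qb φ ∧ Reach (starGraph (ι × κ)) P (replicateLeaves κ b) (replicateLeaves κ c) := by
  classical
  obtain ⟨hlocal, hroot, hleaves⟩ := hstep.isLeafLocal_of_leaf hφ hc
  refine ⟨hroot ▸ hc, reach_of_isLeafLocal hstep.1 ({i} ×ˢ Finset.univ) hlocal hroot ?_ ?_⟩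
  · intro p hp
    simp only [Finset.mem_product, Finset.mem_singleton, Finset.mem_univ, and_true] at hp
    subst hp
    exact ⟨hstep.2.1, hstep.2.2.1⟩
  · intro p hp
    exact hleaves p.1 (by simpa only [Finset.mem_product, Finset.mem_singleton, Finset.mem_univ,
      and_true] using hp)

theorem Reach.replicateLeaves [Fintype κ] (hφ : IsPhaseAssignment 1 P φ)
    (hreach : Reach (starGraph ι) P b c) (hc : c none ∈ Qb φ) :
    Reach (starGraph (ι × κ)) P (replicateLeaves κ b) (replicateLeaves κ c) := by
  induction hreach with
  | refl => exact Relation.ReflTransGen.refl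
  | tail _ hstep ih =>
    obtain ⟨_ | i, t, hstep⟩ := hstep
    · obtain ⟨hb, hstep'⟩ := hstep.replicateLeaves_of_root (κ := κ) hφ hc
      exact (ih hb).tail ⟨none, t, hstep'⟩
    · obtain ⟨hb, hreach'⟩ := hstep.replicateLeaves_of_leaf (κ := κ) hφ hc
      exact (ih hb).trans hreach'

end PumpUp

/-- pump-up lemma for reachable b-configurations of star networks. -/
theorem star_pump_up {Q M ι : Type} [Fintype ι]
    (P : Protocol Q M) (φ : Q → PTag) (hφ : IsPhaseAssignment 1 P φ)
    (L : Option ι → Q)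
    (hreach : Reach (starGraph ι) P (initConf P) L)
    (hb : L none ∈ Qb φ) (N : ℕ) :
    ∃ (ι' : Type) (_ : Fintype ι') (L' : Option ι' → Q),
      Reach (starGraph ι') P (initConf P) L' ∧
      L' none = L none ∧
      bprintSet φ L' = bprintSet φ L ∧
      ∀ q' ∈ bprintSet φ L, N ≤ Set.ncard {i : ι' | L' (some i) = q'} := by
  refine ⟨ι × Fin (N + 1), inferInstance, replicateLeaves (Fin (N + 1)) L,
    hreach.replicateLeaves hφ hb, rfl, bprintSet_replicateLeaves φ L, ?_⟩
  rintro q' ⟨-, i₀, hi₀⟩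
  have hpos : 0 < {i : ι | L (some i) = q'}.ncard := (Set.ncard_pos).mpr ⟨i₀, hi₀⟩
  rw [ncard_replicateLeaves_eq, Nat.card_eq_fintype_card, Fintype.card_fin]
  nlinarith

end BN
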